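/- arXiv:hep-th/0407155 — 4 statements merged into one kernel-verified Lean document; each statement's English description precedes it below -/
import Mathlib

section
/- Define polynomials H_n(x,δ) ∈ ℝ[x] by H_0 = 1, H_1 = 2x, and H_{n+1}(x,δ) = 2x H_n(x,δ) - (2n + n(n-1)δ) H_{n-1}(x,δ). Then for every n ≥ 0, H_n(x,δ) satisfies the functional equation (x + i/√δ) H_n(x + i√δ, δ) - (x - i/√δ) H_n(x - i√δ, δ) = 2i · ((1 + nδ)/√δ) · H_n(x, δ), as an identity of polynomial functions over ℂ, for any δ > 0. -/
/-!
With `s = √δ` consider the operators (`shiftDiff s` and `shiftSum s`)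
`T p(x) = (s x + i) p(x + i s) - (s x - i) p(x - i s)` and
`U p(x) = (s x + i) p(x + i s) + (s x - i) p(x - i s)`.
Multiplication by `x` satisfies `T (x p) = x T p + i s U p` and `U (x p) = x U p + i s T p`,
so the three-term recurrence `H_{n+1} = 2x H_n - c_n H_{n-1}` propagates the pair of identities
`T H_n = 2i(1 + nδ) H_n` and `U H_n = 2s (H_{n+1} - x H_n)` by two-step induction, using `s² = δ`
and `c_{n+1} - c_n = 2(1 + nδ)`. Dividing the first identity by `s` gives the functional equation.
-/

open Polynomial Complex

/-- Deformed Hermite polynomials `H_n(x,δ)` (as polynomials over `ℂ`), defined by the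
three-term recurrence `H_{n+1} = 2x H_n - (2n + n(n-1)δ) H_{n-1}`, `H_0 = 1`, `H_1 = 2x`. -/
noncomputable def deformedHermiteC (δ : ℝ) : ℕ → Polynomial ℂ
  | 0 => 1
  | 1 => 2 * Polynomial.X
  | (n + 2) =>
      2 * Polynomial.X * deformedHermiteC δ (n + 1)
        - Polynomial.C (2 * ((n : ℂ) + 1) + ((n : ℂ) + 1) * (n : ℂ) * (δ : ℂ)) *
            deformedHermiteC δ n

noncomputable section

section ShiftOperators

variable (s : ℂ)

def shiftDiff (p : ℂ[X]) (x : ℂ) : ℂ :=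
  (s * x + I) * p.eval (x + I * s) - (s * x - I) * p.eval (x - I * s)

def shiftSum (p : ℂ[X]) (x : ℂ) : ℂ :=
  (s * x + I) * p.eval (x + I * s) + (s * x - I) * p.eval (x - I * s)

variable (p q : ℂ[X]) (a x : ℂ)

theorem shiftDiff_one : shiftDiff s 1 x = 2 * I := by
  simp only [shiftDiff, eval_one]
  ring

theorem shiftSum_one : shiftSum s 1 x = 2 * s * x := by
  simp only [shiftSum, eval_one]
  ring

theorem shiftDiff_two_mul_X_mul_sub_C_mul :
    shiftDiff s (2 * X * p - C a * q) x
      = 2 * x * shiftDiff s p x + 2 * I * s * shiftSum s p x - a * shiftDiff s q x := by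
  simp only [shiftDiff, shiftSum, eval_sub, eval_mul, eval_X, eval_C, eval_ofNat]
  ring

theorem shiftSum_two_mul_X_mul_sub_C_mul :
    shiftSum s (2 * X * p - C a * q) x
      = 2 * x * shiftSum s p x + 2 * I * s * shiftDiff s p x - a * shiftSum s q x := by
  simp only [shiftDiff, shiftSum, eval_sub, eval_mul, eval_X, eval_C, eval_ofNat]
  ring

end ShiftOperators

section DeformedHermite

variable (δ : ℝ)

def deformedHermiteCoeff (n : ℕ) : ℂ := 2 * n + n * (n - 1) * δ

theorem deformedHermiteCoeff_succ (n : ℕ) :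
    deformedHermiteCoeff δ (n + 1) = deformedHermiteCoeff δ n + 2 * (1 + n * δ) := by
  simp only [deformedHermiteCoeff]
  push_cast
  ring

theorem deformedHermiteC_add_two (n : ℕ) :
    deformedHermiteC δ (n + 2)
      = 2 * X * deformedHermiteC δ (n + 1)
        - C (deformedHermiteCoeff δ (n + 1)) * deformedHermiteC δ n := by
  rw [deformedHermiteC, deformedHermiteCoeff]
  push_cast
  ring_nf

theorem eval_deformedHermiteC_add_two (n : ℕ) (x : ℂ) :
    (deformedHermiteC δ (n + 2)).eval x
      = 2 * x * (deformedHermiteC δ (n + 1)).eval x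
        - deformedHermiteCoeff δ (n + 1) * (deformedHermiteC δ n).eval x := by
  simp only [deformedHermiteC_add_two, eval_sub, eval_mul, eval_X, eval_C, eval_ofNat]

theorem shiftDiff_deformedHermiteC_and_shiftSum {s : ℂ} (hs : s ^ 2 = δ) (x : ℂ) (n : ℕ) :
    shiftDiff s (deformedHermiteC δ n) x = 2 * I * (1 + n * δ) * (deformedHermiteC δ n).eval x ∧
      shiftSum s (deformedHermiteC δ n) x
        = 2 * s * ((deformedHermiteC δ (n + 1)).eval x - x * (deformedHermiteC δ n).eval x) := by
  induction n using Nat.twoStepInduction with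
  | zero =>
    simp only [deformedHermiteC, shiftDiff_one, shiftSum_one, eval_one, eval_mul, eval_X,
      eval_ofNat]
    constructor <;> ring
  | one =>
    simp only [shiftDiff, shiftSum, deformedHermiteC, eval_sub, eval_mul, eval_C, eval_X,
      eval_one, eval_ofNat]
    push_cast
    constructor
    · linear_combination 4 * I * x * hs
    · linear_combination 4 * s * I_sq
  | more n ih₀ ih₁ =>
    obtain ⟨hT₀, hU₀⟩ := ih₀
    obtain ⟨hT₁, hU₁⟩ := ih₁
    have hH₂ := eval_deformedHermiteC_add_two δ n x
    have hH₃ := eval_deformedHermiteC_add_two δ (n + 1) x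
    have hc := deformedHermiteCoeff_succ δ (n + 1)
    simp only [Nat.add_assoc, Nat.reduceAdd] at hU₁ hH₃ hc ⊢
    push_cast at hT₁ hU₁ hc ⊢
    constructor
    · conv_lhs => rw [deformedHermiteC_add_two, shiftDiff_two_mul_X_mul_sub_C_mul, hT₀, hT₁, hU₁]
      linear_combination 4 * I * ((deformedHermiteC δ (n + 2)).eval x
        - x * (deformedHermiteC δ (n + 1)).eval x) * hs - 2 * I * (1 + n * δ) * hH₂
    · conv_lhs => rw [deformedHermiteC_add_two, shiftSum_two_mul_X_mul_sub_C_mul, hU₀, hT₁, hU₁]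
      linear_combination 2 * s * x * hH₂ - 2 * s * hH₃
        + 2 * s * (deformedHermiteC δ (n + 1)).eval x * hc
        + 4 * s * (1 + (n + 1) * δ) * (deformedHermiteC δ (n + 1)).eval x * I_sq

end DeformedHermite

end

theorem deformedHermite_functional_equation (δ : ℝ) (hδ : 0 < δ) (n : ℕ) (x : ℂ) :
    (x + Complex.I / (Real.sqrt δ : ℂ)) *
        (deformedHermiteC δ n).eval (x + Complex.I * (Real.sqrt δ : ℂ))
      - (x - Complex.I / (Real.sqrt δ : ℂ)) *
        (deformedHermiteC δ n).eval (x - Complex.I * (Real.sqrt δ : ℂ))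
      = 2 * Complex.I * ((1 + (n : ℂ) * (δ : ℂ)) / (Real.sqrt δ : ℂ)) *
          (deformedHermiteC δ n).eval x := by
  have hs : (Real.sqrt δ : ℂ) ^ 2 = δ := by
    rw [← ofReal_pow, Real.sq_sqrt hδ.le]
  have hs₀ : (Real.sqrt δ : ℂ) ≠ 0 := ofReal_ne_zero.mpr (Real.sqrt_pos.mpr hδ).ne'
  have hT := (shiftDiff_deformedHermiteC_and_shiftSum δ hs x n).1
  simp only [shiftDiff] at hT
  field_simp
  linear_combination hT
end

section
/- Let H_n(x,δ) be defined by H_{n+1} = 2x H_n - (2n+n(n-1)δ) H_{n-1}, H_{-1}=0, H_0=1. For δ > 0, the formal power series (actually analytic function for |t| < 1/√δ) G(t,x,δ) = ∑_{n≥0} (t^n/n!) H_n(x,δ) equals exp(2x · arctan(√δ t)/√δ) / (1 + δ t^2)^{1/δ}. -/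
open Finset

/-- Deformed Hermite polynomials `H_n(x,δ)` defined by the three-term recurrence
`H_{n+1} = 2x H_n - (2n + n(n-1)δ) H_{n-1}`, `H_{-1} = 0`, `H_0 = 1` (so `H_1 = 2x`). -/
noncomputable def deformedHermite (δ : ℝ) : ℕ → ℝ → ℝ
  | 0, _ => 1
  | 1, x => 2 * x
  | (n + 2), x =>
      2 * x * deformedHermite δ (n + 1) x
        - (2 * ((n : ℝ) + 1) + ((n : ℝ) + 1) * (n : ℝ) * δ) * deformedHermite δ n x

noncomputable def dhCoeff (δ x : ℝ) (n : ℕ) : ℝ := deformedHermite δ n x / n.factorial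

lemma dhCoeff_zero (δ x : ℝ) : dhCoeff δ x 0 = 1 := by simp [dhCoeff, deformedHermite]

lemma dhCoeff_one (δ x : ℝ) : dhCoeff δ x 1 = 2 * x := by simp [dhCoeff, deformedHermite]

lemma dhCoeff_two (δ x : ℝ) : 2 * dhCoeff δ x 2 = 2 * x * dhCoeff δ x 1 - 2 * dhCoeff δ x 0 := by
  simp [dhCoeff, deformedHermite]
  ring

lemma dhCoeff_rec (δ x : ℝ) (k : ℕ) :
    ((k:ℝ) + 3) * dhCoeff δ x (k + 3) =
      2 * x * dhCoeff δ x (k + 2) - 2 * dhCoeff δ x (k + 1)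
        - δ * ((k:ℝ) + 1) * dhCoeff δ x (k + 1) := by
  have hrec : deformedHermite δ (k + 3) x = 2 * x * deformedHermite δ (k + 2) x
      - (2 * (((k+1:ℕ):ℝ) + 1) + (((k+1:ℕ):ℝ) + 1) * ((k+1:ℕ):ℝ) * δ)
        * deformedHermite δ (k + 1) x := rfl
  have e3 : (((k + 3).factorial : ℕ) : ℝ) = ((k:ℝ) + 3) * ((k + 2).factorial : ℕ) := by
    rw [show k + 3 = (k + 2) + 1 by rfl, Nat.factorial_succ]; push_cast; ring
  have e2 : (((k + 2).factorial : ℕ) : ℝ) = ((k:ℝ) + 2) * ((k + 1).factorial : ℕ) := by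
    rw [show k + 2 = (k + 1) + 1 by rfl, Nat.factorial_succ]; push_cast; ring
  have f2 : (0:ℝ) < ((k + 2).factorial : ℕ) := by positivity
  have f1 : (0:ℝ) < ((k + 1).factorial : ℕ) := by positivity
  have f3 : (0:ℝ) < ((k + 3).factorial : ℕ) := by positivity
  unfold dhCoeff
  rw [hrec, e3, e2]
  push_cast
  field_simp
  ring

lemma deformedHermite_growth (δ x C : ℝ) (hδ : 0 < δ) (hC : Real.sqrt δ < C) :
    ∃ A : ℝ, 0 < A ∧ ∀ n : ℕ, |deformedHermite δ n x| ≤ A * n.factorial * C ^ n := by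
  have hC0 : 0 < C := lt_of_le_of_lt (Real.sqrt_nonneg δ) hC
  have hδC : δ < C ^ 2 := by
    nlinarith [Real.sq_sqrt hδ.le, Real.sqrt_nonneg δ]
  set N : ℕ := ⌈(2 * |x| * C + 2) / (C ^ 2 - δ)⌉₊ with hN
  set A : ℝ := 1 + ∑ n ∈ Finset.range (N + 2),
      |deformedHermite δ n x| / (n.factorial * C ^ n) with hA
  have hsumnn : ∀ n ∈ Finset.range (N + 2),
      0 ≤ |deformedHermite δ n x| / (n.factorial * C ^ n) := by
    intro n _; positivity
  have hA1 : 1 ≤ A := le_add_of_nonneg_right (Finset.sum_nonneg hsumnn)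
  have hA0 : 0 < A := lt_of_lt_of_le one_pos hA1
  refine ⟨A, hA0, ?_⟩
  have hsmall : ∀ n, n < N + 2 → |deformedHermite δ n x| ≤ A * n.factorial * C ^ n := by
    intro n hn
    have h1 : |deformedHermite δ n x| / (n.factorial * C ^ n) ≤ A := by
      have := Finset.single_le_sum hsumnn (Finset.mem_range.mpr hn)
      linarith
    have hpos : (0:ℝ) < n.factorial * C ^ n := by positivity
    calc |deformedHermite δ n x|
        = |deformedHermite δ n x| / (n.factorial * C ^ n) * (n.factorial * C ^ n) := by
          field_simp
      _ ≤ A * (n.factorial * C ^ n) := mul_le_mul_of_nonneg_right h1 hpos.le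
      _ = A * n.factorial * C ^ n := by ring
  intro n
  induction n using Nat.strong_induction_on with
  | _ n ih =>
    rcases lt_or_ge n (N + 2) with h | h
    · exact hsmall n h
    · obtain ⟨m, rfl⟩ : ∃ m, n = m + 2 := ⟨n - 2, by omega⟩
      have hm : N ≤ m := by omega
      have h1 := ih (m + 1) (by omega)
      have h0 := ih m (by omega)
      have hkey : 2 * |x| * C + 2 + (m:ℝ) * δ ≤ ((m:ℝ) + 2) * C ^ 2 := by
        have hle := Nat.le_ceil ((2 * |x| * C + 2) / (C ^ 2 - δ))
        rw [← hN] at hle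
        have h2 : 2 * |x| * C + 2 ≤ (N:ℝ) * (C ^ 2 - δ) := by
          rw [div_le_iff₀ (by linarith)] at hle
          linarith
        have h3 : (N:ℝ) * (C ^ 2 - δ) ≤ (m:ℝ) * (C ^ 2 - δ) :=
          mul_le_mul_of_nonneg_right (by exact_mod_cast hm) (by linarith)
        have hm0 : (0:ℝ) ≤ (m:ℝ) := Nat.cast_nonneg m
        nlinarith
      have hco : (0:ℝ) ≤ 2 * ((m:ℝ) + 1) + ((m:ℝ) + 1) * (m:ℝ) * δ := by positivity
      have e1 : (((m + 1).factorial : ℕ) : ℝ) = ((m:ℝ) + 1) * m.factorial := by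
        rw [Nat.factorial_succ]; push_cast; ring
      have e2 : (((m + 2).factorial : ℕ) : ℝ) = ((m:ℝ) + 2) * (((m + 1).factorial : ℕ) : ℝ) := by
        rw [show m + 2 = (m + 1) + 1 by rfl, Nat.factorial_succ]; push_cast; ring
      have habs : |deformedHermite δ (m + 2) x|
          ≤ 2 * |x| * |deformedHermite δ (m + 1) x|
            + (2 * ((m:ℝ) + 1) + ((m:ℝ) + 1) * (m:ℝ) * δ) * |deformedHermite δ m x| := by
        have : deformedHermite δ (m + 2) x = 2 * x * deformedHermite δ (m + 1) x
            - (2 * ((m:ℝ) + 1) + ((m:ℝ) + 1) * (m:ℝ) * δ) * deformedHermite δ m x := rfl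
        rw [this]
        refine (abs_sub _ _).trans ?_
        rw [abs_mul, abs_mul, abs_mul, abs_two, abs_of_nonneg hco]
      have hX : (0:ℝ) ≤ A * m.factorial * C ^ m := by positivity
      calc |deformedHermite δ (m + 2) x|
          ≤ 2 * |x| * |deformedHermite δ (m + 1) x|
            + (2 * ((m:ℝ) + 1) + ((m:ℝ) + 1) * (m:ℝ) * δ) * |deformedHermite δ m x| := habs
        _ ≤ 2 * |x| * (A * (m + 1).factorial * C ^ (m + 1))
            + (2 * ((m:ℝ) + 1) + ((m:ℝ) + 1) * (m:ℝ) * δ) * (A * m.factorial * C ^ m) := by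
            gcongr
        _ = (A * m.factorial * C ^ m * ((m:ℝ) + 1)) * (2 * |x| * C + 2 + (m:ℝ) * δ) := by
            rw [e1]; ring
        _ ≤ (A * m.factorial * C ^ m * ((m:ℝ) + 1)) * (((m:ℝ) + 2) * C ^ 2) := by
            have : (0:ℝ) ≤ A * m.factorial * C ^ m * ((m:ℝ) + 1) := by positivity
            exact mul_le_mul_of_nonneg_left hkey this
        _ = A * (m + 2).factorial * C ^ (m + 2) := by
            rw [e2, e1]; ring

lemma G_hasDerivAt (δ x : ℝ) (hδ : 0 < δ) (y : ℝ) :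
    HasDerivAt (fun z => Real.exp (2 * x * Real.arctan (Real.sqrt δ * z) / Real.sqrt δ) /
        (1 + δ * z ^ 2) ^ (1 / δ))
      ((2 * x - 2 * y) / (1 + δ * y ^ 2) *
        (Real.exp (2 * x * Real.arctan (Real.sqrt δ * y) / Real.sqrt δ) /
          (1 + δ * y ^ 2) ^ (1 / δ))) y := by
  set sd := Real.sqrt δ with hsd
  have hsd0 : 0 < sd := Real.sqrt_pos.mpr hδ
  have hsd2 : sd ^ 2 = δ := Real.sq_sqrt hδ.le
  have hB : 0 < 1 + δ * y ^ 2 := by positivity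
  have h1 : HasDerivAt (fun z : ℝ => sd * z) sd y := by
    simpa using (hasDerivAt_id y).const_mul sd
  have h2 : HasDerivAt (fun z : ℝ => Real.arctan (sd * z))
      (1 / (1 + (sd * y) ^ 2) * sd) y := (Real.hasDerivAt_arctan (sd * y)).comp y h1
  have h3 : HasDerivAt (fun z : ℝ => 2 * x * Real.arctan (sd * z) / sd)
      (2 * x * (1 / (1 + (sd * y) ^ 2) * sd) / sd) y := (h2.const_mul (2 * x)).div_const sd
  have h4 : HasDerivAt (fun z : ℝ => Real.exp (2 * x * Real.arctan (sd * z) / sd))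
      (Real.exp (2 * x * Real.arctan (sd * y) / sd) *
        (2 * x * (1 / (1 + (sd * y) ^ 2) * sd) / sd)) y := h3.exp
  have h5 : HasDerivAt (fun z : ℝ => 1 + δ * z ^ 2) (δ * (2 * y ^ 1)) y := by
    exact ((hasDerivAt_pow 2 y).const_mul δ).const_add 1
  have h6 : HasDerivAt (fun z : ℝ => (1 + δ * z ^ 2) ^ (1 / δ))
      (1 / δ * (1 + δ * y ^ 2) ^ (1 / δ - 1) * (δ * (2 * y ^ 1))) y :=
    by have := (Real.hasDerivAt_rpow_const (x := 1 + δ * y ^ 2) (p := 1 / δ) (Or.inl hB.ne')).comp y h5; exact this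
  have hP : (0:ℝ) < (1 + δ * y ^ 2) ^ (1 / δ) := Real.rpow_pos_of_pos hB _
  have h7 := h4.div h6 hP.ne'
  convert h7 using 1
  · rfl
  · rfl
  · rfl
  have hE : (1 + δ * y ^ 2) ^ (1 / δ - 1) = (1 + δ * y ^ 2) ^ (1 / δ) / (1 + δ * y ^ 2) := by
    rw [Real.rpow_sub hB, Real.rpow_one]
  rw [hE]
  have hsy : (sd * y) ^ 2 = δ * y ^ 2 := by rw [mul_pow, hsd2]
  rw [hsy]
  field_simp

theorem deformedHermite_generating_function (δ : ℝ) (hδ : 0 < δ) (x t : ℝ)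
    (ht : |t| < 1 / Real.sqrt δ) :
    HasSum (fun n : ℕ => t ^ n / (Nat.factorial n : ℝ) * deformedHermite δ n x)
      (Real.exp (2 * x * Real.arctan (Real.sqrt δ * t) / Real.sqrt δ) /
        (1 + δ * t ^ 2) ^ (1 / δ)) := by
  have hsd0 : 0 < Real.sqrt δ := Real.sqrt_pos.mpr hδ
  set sd := Real.sqrt δ with hsd
  have ht' : sd * |t| < 1 := by
    have := (lt_div_iff₀ hsd0).mp ht
    linarith
  have habt : 0 ≤ |t| := abs_nonneg t
  obtain ⟨C, r, hC, hr0, htr, hCr⟩ :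
      ∃ C r : ℝ, sd < C ∧ 0 < r ∧ |t| < r ∧ C * r < 1 := by
    refine ⟨sd + (1 - sd * |t|) / (2 * (sd + |t| + 1)),
      |t| + (1 - sd * |t|) / (2 * (sd + |t| + 1)), ?_, ?_, ?_, ?_⟩
    · have : 0 < (1 - sd * |t|) / (2 * (sd + |t| + 1)) := by
        apply div_pos (by linarith) (by positivity)
      linarith
    · have : 0 < (1 - sd * |t|) / (2 * (sd + |t| + 1)) := by
        apply div_pos (by linarith) (by positivity)
      linarith
    · have : 0 < (1 - sd * |t|) / (2 * (sd + |t| + 1)) := by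
        apply div_pos (by linarith) (by positivity)
      linarith
    · set e : ℝ := (1 - sd * |t|) / (2 * (sd + |t| + 1)) with he
      have hden : (0:ℝ) < 2 * (sd + |t| + 1) := by positivity
      have he0 : 0 < e := div_pos (by linarith) hden
      have heeq : e * (2 * (sd + |t| + 1)) = 1 - sd * |t| := by
        rw [he]; field_simp
      have he1 : 2 * e ≤ 1 := by nlinarith
      nlinarith
  have hC0 : 0 < C := lt_trans hsd0 hC
  have hq0 : 0 ≤ C * r := by positivity
  -- growth bound
  obtain ⟨A, hA0, hA⟩ := deformedHermite_growth δ x C hδ hC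
  set a : ℕ → ℝ := dhCoeff δ x with ha
  have habs_a : ∀ n : ℕ, |a n| ≤ A * C ^ n := by
    intro n
    have hf : (0:ℝ) < n.factorial := by positivity
    rw [ha, dhCoeff, abs_div, Nat.abs_cast, div_le_iff₀ hf]
    calc |deformedHermite δ n x| ≤ A * n.factorial * C ^ n := hA n
      _ = A * C ^ n * n.factorial := by ring
  -- the ball
  set s : Set ℝ := Metric.ball (0:ℝ) r with hs
  have hmem : ∀ y ∈ s, |y| < r := by
    intro y hy
    simpa [hs, Real.norm_eq_abs] using mem_ball_zero_iff.mp hy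
  have h0s : (0:ℝ) ∈ s := Metric.mem_ball_self hr0
  have hts : t ∈ s := by
    rw [hs, mem_ball_zero_iff, Real.norm_eq_abs]; exact htr
  -- summable bound for derivatives
  set u : ℕ → ℝ := fun n => A * C ^ n * ((n:ℝ) * r ^ (n - 1)) with hu_def
  have hu : Summable u := by
    have h1 : Summable (fun n : ℕ => (n:ℝ) * (C * r) ^ n) := by
      have := summable_pow_mul_geometric_of_norm_lt_one (R := ℝ) 1
        (r := C * r) (by rw [Real.norm_eq_abs, abs_of_nonneg hq0]; exact hCr)
      simpa using this
    refine Summable.of_nonneg_of_le (fun n => by positivity) ?_ (h1.mul_left (A / r))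
    intro n
    match n with
    | 0 => simp [hu_def]
    | (m + 1) =>
      have : u (m + 1) = A / r * (((m+1:ℕ):ℝ) * (C * r) ^ (m + 1)) := by
        rw [hu_def]
        simp only [Nat.add_sub_cancel]
        field_simp
        ring
      rw [this]
  -- the series functions
  set g : ℕ → ℝ → ℝ := fun n z => a n * z ^ n with hg_def
  set g' : ℕ → ℝ → ℝ := fun n z => a n * ((n:ℝ) * z ^ (n - 1)) with hg'_def
  have hg : ∀ (n : ℕ) (y : ℝ), y ∈ s → HasDerivAt (g n) (g' n y) y := by
    intro n y _
    exact (hasDerivAt_pow n y).const_mul (a n)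
  have hg' : ∀ (n : ℕ) (y : ℝ), y ∈ s → ‖g' n y‖ ≤ u n := by
    intro n y hy
    rw [hg'_def, hu_def, Real.norm_eq_abs, abs_mul, abs_mul, abs_pow, Nat.abs_cast]
    refine mul_le_mul (habs_a n) ?_ (by positivity) (by positivity)
    exact mul_le_mul_of_nonneg_left
      (pow_le_pow_left₀ (abs_nonneg y) (hmem y hy).le _) (Nat.cast_nonneg n)
  have hg0 : Summable fun n => g n 0 := by
    apply summable_of_ne_finset_zero (s := ({0} : Finset ℕ))
    intro n hn
    have hn0 : n ≠ 0 := by simpa using hn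
    simp [hg_def, zero_pow hn0]
  -- F and its derivative
  set F : ℝ → ℝ := fun z => ∑' n, a n * z ^ n with hF_def
  have hFd : ∀ y ∈ s, HasDerivAt F (∑' n, g' n y) y := by
    intro y hy
    exact hasDerivAt_tsum_of_isPreconnected hu Metric.isOpen_ball
      (convex_ball (0:ℝ) r).isPreconnected hg hg' h0s hg0 hy
  have hSf : ∀ y ∈ s, Summable (fun n => a n * y ^ n) := by
    intro y hy
    refine Summable.of_norm_bounded
      ((summable_geometric_of_lt_one hq0 hCr).mul_left A) ?_
    intro n
    calc ‖a n * y ^ n‖ = |a n| * |y| ^ n := by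
          rw [Real.norm_eq_abs, abs_mul, abs_pow]
      _ ≤ A * C ^ n * r ^ n :=
          mul_le_mul (habs_a n) (pow_le_pow_left₀ (abs_nonneg y) (hmem y hy).le n)
            (by positivity) (by positivity)
      _ = A * (C * r) ^ n := by rw [mul_pow]; ring
  have hSd : ∀ y ∈ s, Summable (fun n => g' n y) := by
    intro y hy
    exact Summable.of_norm_bounded hu (fun n => hg' n y hy)
  -- the ODE
  have hODE : ∀ y ∈ s, (1 + δ * y ^ 2) * (∑' n, g' n y) = (2 * x - 2 * y) * F y := by
    intro y hy
    have hsum_f : HasSum (fun n => a n * y ^ n) (F y) := (hSf y hy).hasSum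
    have hsum_d : HasSum (fun n => g' n y) (∑' n, g' n y) := (hSd y hy).hasSum
    set Dy := ∑' n, g' n y with hDy_def
    have T1 : HasSum (fun n : ℕ => a (n + 1) * (((n:ℝ) + 1) * y ^ n)) Dy := by
      have h := (hasSum_nat_add_iff' (f := fun n => g' n y) 1).mpr hsum_d
      simp only [hg'_def, range_one, sum_singleton, Nat.cast_zero, zero_mul, mul_zero,
        sub_zero, Nat.add_sub_cancel] at h
      convert h using 2 with n
      · rfl
      push_cast
      ring
    set gg : ℕ → ℝ := fun m => if 2 ≤ m then δ * ((m:ℝ) - 1) * a (m - 1) * y ^ m else 0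
      with hgg_def
    have T2 : HasSum gg (δ * y ^ 2 * Dy) := by
      have h2 := T1.mul_left (δ * y ^ 2)
      have h2' : HasSum (fun n => gg (n + 2)) (δ * y ^ 2 * Dy) := by
        convert h2 using 2 with n
        · rfl
        rw [hgg_def]
        simp only [le_add_iff_nonneg_left, zero_le, if_true, Nat.add_sub_cancel]
        push_cast
        ring
      have h3 := (hasSum_nat_add_iff (f := gg) 2).mp h2'
      have hz : (∑ m ∈ Finset.range 2, gg m) = 0 := by
        rw [hgg_def]; norm_num [Finset.sum_range_succ]
      rw [hz, add_zero] at h3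
      exact h3
    set hh : ℕ → ℝ := fun m => if 1 ≤ m then 2 * a (m - 1) * y ^ m else 0 with hhh_def
    have T4 : HasSum hh (2 * y * F y) := by
      have h4 := hsum_f.mul_left (2 * y)
      have h4' : HasSum (fun n => hh (n + 1)) (2 * y * F y) := by
        convert h4 using 2 with n
        · rfl
        rw [hhh_def]
        simp only [le_add_iff_nonneg_left, zero_le, if_true, Nat.add_sub_cancel]
        ring
      have h5 := (hasSum_nat_add_iff (f := hh) 1).mp h4'
      have hz : (∑ m ∈ Finset.range 1, hh m) = 0 := by
        rw [hhh_def]; norm_num [Finset.sum_range_succ]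
      rw [hz, add_zero] at h5
      exact h5
    have T3 : HasSum (fun n => 2 * x * (a n * y ^ n)) (2 * x * F y) := hsum_f.mul_left (2 * x)
    have lhsSum : HasSum (fun n => a (n + 1) * (((n:ℝ) + 1) * y ^ n) + gg n)
        (Dy + δ * y ^ 2 * Dy) := T1.add T2
    have rhsSum : HasSum (fun n => 2 * x * (a n * y ^ n) - hh n)
        (2 * x * F y - 2 * y * F y) := T3.sub T4
    have hfun : (fun n => a (n + 1) * (((n:ℝ) + 1) * y ^ n) + gg n)
        = (fun n => 2 * x * (a n * y ^ n) - hh n) := by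
      funext n
      match n with
      | 0 =>
        simp only [hgg_def, hhh_def]
        norm_num [ha, dhCoeff_one, dhCoeff_zero]
      | 1 =>
        simp only [hgg_def, hhh_def]
        norm_num
        rw [ha]
        linear_combination y * dhCoeff_two δ x
      | (k + 2) =>
        simp only [hgg_def, hhh_def]
        have c1 : 2 ≤ k + 2 := by omega
        have c2 : 1 ≤ k + 2 := by omega
        rw [if_pos c1, if_pos c2]
        rw [ha]
        have e1 : k + 2 - 1 = k + 1 := by omega
        have e3 : k + 2 + 1 = k + 3 := by omega
        rw [e1, e3]
        push_cast
        linear_combination y ^ (k + 2) * dhCoeff_rec δ x k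
      
    rw [hfun] at lhsSum
    have := lhsSum.unique rhsSum
    linear_combination this
  -- the RHS function
  set G : ℝ → ℝ := fun z => Real.exp (2 * x * Real.arctan (sd * z) / sd) /
      (1 + δ * z ^ 2) ^ (1 / δ) with hG_def
  have hGpos : ∀ y : ℝ, 0 < G y := by
    intro y
    exact div_pos (Real.exp_pos _) (Real.rpow_pos_of_pos (by positivity) _)
  have hQd : ∀ y ∈ s, HasDerivAt (fun z => F z / G z) 0 y := by
    intro y hy
    have hB : (0:ℝ) < 1 + δ * y ^ 2 := by positivity
    have hF := hFd y hy
    have hGd : HasDerivAt G ((2 * x - 2 * y) / (1 + δ * y ^ 2) * G y) y :=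
      G_hasDerivAt δ x hδ y
    have h := hF.div hGd (hGpos y).ne'
    have hDyF : (∑' n, g' n y) * G y
        - F y * ((2 * x - 2 * y) / (1 + δ * y ^ 2) * G y) = 0 := by
      have hO := hODE y hy
      have hd : (∑' n, g' n y) = (2 * x - 2 * y) * F y / (1 + δ * y ^ 2) := by
        rw [eq_div_iff hB.ne']
        linear_combination hO
      rw [hd]
      field_simp
      ring
    convert h using 1
    · rfl
    · rfl
    · rfl
    rw [hDyF, zero_div]
  have hdiffOn : DifferentiableOn ℝ (fun z => F z / G z) s := fun y hy =>
    ((hQd y hy).differentiableAt).differentiableWithinAt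
  have hfzero : ∀ y ∈ s, fderivWithin ℝ (fun z => F z / G z) s y = 0 := by
    intro y hy
    rw [hs] at hy ⊢
    rw [fderivWithin_of_isOpen Metric.isOpen_ball hy]
    have hfd := (hQd y (by rw [hs]; exact hy)).hasFDerivAt.fderiv
    rw [hfd]
    exact ContinuousLinearMap.ext fun z => by simp
  have hconst := (convex_ball (0:ℝ) r).is_const_of_fderivWithin_eq_zero
    hdiffOn hfzero hts h0s
  have hF0 : F 0 = 1 := by
    have h1 : F 0 = a 0 := by
      rw [hF_def]
      simp only
      rw [tsum_eq_single 0 (by intro n hn; simp [zero_pow hn])]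
      simp
    rw [h1, ha, dhCoeff_zero]
  have hG0 : G 0 = 1 := by
    rw [hG_def]
    simp
  have hFt : F t = G t := by
    have h1 : F t / G t = F 0 / G 0 := hconst
    rw [hF0, hG0] at h1
    norm_num at h1
    exact (div_eq_one_iff_eq (hGpos t).ne').mp h1
  have hS : HasSum (fun n => a n * t ^ n) (F t) := (hSf t hts).hasSum
  rw [hFt] at hS
  have hfun2 : (fun n : ℕ => t ^ n / (Nat.factorial n : ℝ) * deformedHermite δ n x)
      = fun n => a n * t ^ n := by
    funext n
    rw [ha, dhCoeff]
    ring
  rw [hfun2]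
  exact hS
end

section
/- Define H_n(x,δ) by H_{n+1} = 2x H_n - (2n+n(n-1)δ)H_{n-1} (H_{-1}=0, H_0=1) and L_n^{(-1/2)}(x,δ) by (n+1)L_{n+1}^{(-1/2)}(x,δ) + (x - (2n+1/2 + n(2n)δ)) L_n^{(-1/2)}(x,δ) + (n-1/2)(1+(n-1)δ)(1+(n-1/2)δ) L_{n-1}^{(-1/2)}(x,δ) = 0 (L_{-1}=0, L_0=1). Then for all r ≥ 0, 2^{-2r} H_{2r}(x,δ) = (-1)^r r! L_r^{(-1/2)}(x², δ), as polynomials in x. -/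
/-!
Eliminating the odd-indexed terms from the Hermite recurrence gives a three-term recurrence
for `H_{2r}(x, δ)` in `r` whose coefficients depend on `x` only through `x²`. Under the
rescaling `H_{2r} = (-4)^r r! L_r` it becomes exactly the recurrence of `L_r^{(-1/2)}(x², δ)`,
and the initial values `r = 0, 1` agree.
-/

open Finset

/-- Deformed Laguerre polynomials `L_n^{(α)}(x,δ)` defined by the three-term recurrence
`(n+1) L_{n+1} + (x - (2n+α+1+n(2n+2α+1)δ)) L_n + (n+α)(1+(n-1)δ)(1+(n+α)δ) L_{n-1} = 0`,
`L_{-1} = 0`, `L_0 = 1`. -/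
noncomputable def deformedLaguerre (α δ : ℝ) : ℕ → ℝ → ℝ
  | 0, _ => 1
  | 1, x => α + 1 - x
  | (n + 2), x =>
      (((2 * ((n : ℝ) + 1) + α + 1 + ((n : ℝ) + 1) * (2 * ((n : ℝ) + 1) + 2 * α + 1) * δ) - x)
          * deformedLaguerre α δ (n + 1) x
        - ((n : ℝ) + 1 + α) * (1 + (n : ℝ) * δ) * (1 + ((n : ℝ) + 1 + α) * δ)
          * deformedLaguerre α δ n x) / ((n : ℝ) + 2)

lemma deformedHermite_add_two (δ : ℝ) (n : ℕ) (x : ℝ) :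
    deformedHermite δ (n + 2) x = 2 * x * deformedHermite δ (n + 1) x
      - (2 * ((n : ℝ) + 1) + ((n : ℝ) + 1) * n * δ) * deformedHermite δ n x := rfl

lemma deformedHermite_add_four (δ : ℝ) (n : ℕ) (x : ℝ) :
    deformedHermite δ (n + 4) x
      = (4 * x ^ 2 - (2 * ((n : ℝ) + 3) + ((n : ℝ) + 3) * (n + 2) * δ)
          - (2 * ((n : ℝ) + 2) + ((n : ℝ) + 2) * (n + 1) * δ)) * deformedHermite δ (n + 2) x
        - (2 * ((n : ℝ) + 2) + ((n : ℝ) + 2) * (n + 1) * δ)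
          * (2 * ((n : ℝ) + 1) + ((n : ℝ) + 1) * n * δ) * deformedHermite δ n x := by
  have h4 := deformedHermite_add_two δ (n + 2) x
  have h3 := deformedHermite_add_two δ (n + 1) x
  have h2 := deformedHermite_add_two δ n x
  push_cast at h4 h3
  linear_combination h4 + 2 * x * h3
    + (2 * ((n : ℝ) + 2) + ((n : ℝ) + 2) * (n + 1) * δ) * h2

lemma deformedLaguerre_add_two_mul (α δ : ℝ) (n : ℕ) (x : ℝ) :
    ((n : ℝ) + 2) * deformedLaguerre α δ (n + 2) x
      = ((2 * ((n : ℝ) + 1) + α + 1 + ((n : ℝ) + 1) * (2 * ((n : ℝ) + 1) + 2 * α + 1) * δ) - x)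
          * deformedLaguerre α δ (n + 1) x
        - ((n : ℝ) + 1 + α) * (1 + (n : ℝ) * δ) * (1 + ((n : ℝ) + 1 + α) * δ)
          * deformedLaguerre α δ n x := by
  rw [deformedLaguerre, mul_div_cancel₀ _ (by positivity)]

lemma deformedHermite_two_mul (δ : ℝ) (r : ℕ) (x : ℝ) :
    deformedHermite δ (2 * r) x
      = (-4 : ℝ) ^ r * r.factorial * deformedLaguerre (-1/2) δ r (x ^ 2) := by
  induction r using Nat.twoStepInduction with
  | zero => simp [deformedHermite, deformedLaguerre]
  | one =>
    norm_num [deformedHermite, deformedLaguerre]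
    ring
  | more n ih₀ ih₁ =>
    rw [show 2 * (n + 2) = 2 * n + 4 by ring, deformedHermite_add_four,
      show 2 * n + 2 = 2 * (n + 1) by ring, ih₀, ih₁]
    have hL := deformedLaguerre_add_two_mul (-1/2) δ n (x ^ 2)
    simp only [Nat.factorial_succ]
    push_cast
    linear_combination -(-4 : ℝ) ^ (n + 2) * ((n : ℝ) + 1) * n.factorial * hL

theorem deformedHermite_deformedLaguerre_even_general (δ : ℝ) (r : ℕ) (x : ℝ) :
    ((2 : ℝ) ^ (2 * r))⁻¹ * deformedHermite δ (2 * r) x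
      = (-1 : ℝ) ^ r * (Nat.factorial r : ℝ) * deformedLaguerre (-1/2) δ r (x ^ 2) := by
  rw [deformedHermite_two_mul, pow_mul, show (-4 : ℝ) = -1 * 2 ^ 2 by norm_num, mul_pow]
  field_simp

theorem deformedHermite_deformedLaguerre_even (δ : ℝ) (hδ : 0 < δ) (r : ℕ) (x : ℝ) :
    ((2 : ℝ) ^ (2 * r))⁻¹ * deformedHermite δ (2 * r) x
      = (-1 : ℝ) ^ r * (Nat.factorial r : ℝ) * deformedLaguerre (-1/2) δ r (x ^ 2) :=
  deformedHermite_deformedLaguerre_even_general δ r x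
end

section
/- The deformed Hermite polynomial equals a Meixner–Pollaczek polynomial: for δ > 0 and all n ≥ 0, H_n(x,δ) = n! δ^{n/2} P_n^{(1/δ)}(x/√δ; π/2), where P_n^{(λ)}(y;φ) is the Meixner–Pollaczek polynomial defined by its three-term recurrence (n+1)P_{n+1}^{(λ)}(y;φ) = 2(y sin φ + (n+λ)cos φ) P_n^{(λ)}(y;φ) - (n+2λ-1) P_{n-1}^{(λ)}(y;φ), P_{-1}=0, P_0=1. At φ = π/2 this reads (n+1)P_{n+1}^{(λ)}(y;π/2) = 2y P_n^{(λ)}(y;π/2) - (n+2λ-1)P_{n-1}^{(λ)}(y;π/2). -/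
/-- Meixner–Pollaczek polynomial `P_n^{(λ)}(y; π/2)`, defined by the three-term recurrence
`(n+1) P_{n+1} = 2y P_n - (n+2λ-1) P_{n-1}`, `P_{-1} = 0`, `P_0 = 1` (so `P_1 = 2y`). -/
noncomputable def meixnerPollaczekHalfPi (lam : ℝ) : ℕ → ℝ → ℝ
  | 0, _ => 1
  | 1, y => 2 * y
  | (n + 2), y =>
      (2 * y * meixnerPollaczekHalfPi lam (n + 1) y
        - ((n : ℝ) + 1 + 2 * lam - 1) * meixnerPollaczekHalfPi lam n y) / ((n : ℝ) + 2)

open Nat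

theorem meixnerPollaczekHalfPi_recurrence (lam y : ℝ) (n : ℕ) :
    ((n : ℝ) + 2) * meixnerPollaczekHalfPi lam (n + 2) y
      = 2 * y * meixnerPollaczekHalfPi lam (n + 1) y
        - ((n : ℝ) + 2 * lam) * meixnerPollaczekHalfPi lam n y := by
  rw [meixnerPollaczekHalfPi, mul_div_cancel₀ _ (by positivity)]
  ring

theorem deformedHermite_sq_eq_meixnerPollaczek (s : ℝ) (hs : s ≠ 0) (n : ℕ) (x : ℝ) :
    deformedHermite (s ^ 2) n x
      = n ! * s ^ n * meixnerPollaczekHalfPi (1 / s ^ 2) n (x / s) := by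
  induction n using Nat.twoStepInduction with
  | zero => simp [deformedHermite, meixnerPollaczekHalfPi]
  | one => simp [deformedHermite, meixnerPollaczekHalfPi]; field_simp
  | more n ih₀ ih₁ =>
    have hrec := meixnerPollaczekHalfPi_recurrence (1 / s ^ 2) (x / s) n
    rw [deformedHermite, ih₀, ih₁, factorial_succ (n + 1), factorial_succ n]
    push_cast
    field_simp at hrec ⊢
    linear_combination (-s ^ n) * hrec

theorem deformedHermite_eq_meixnerPollaczek (δ : ℝ) (hδ : 0 < δ) (n : ℕ) (x : ℝ) :
    deformedHermite δ n x
      = (Nat.factorial n : ℝ) * (Real.sqrt δ) ^ n *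
          meixnerPollaczekHalfPi (1 / δ) n (x / Real.sqrt δ) := by
  have h := deformedHermite_sq_eq_meixnerPollaczek (Real.sqrt δ) (Real.sqrt_pos.2 hδ).ne' n x
  rwa [Real.sq_sqrt hδ.le] at h
end
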